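/- Suppose Q : ℝⁿ → Matrix (Fin m) (Fin m) ℝ is a conservative Q-matrix field with twice continuously differentiable entries, admitting a family of invariant distributions μ^x and uniformly exponentially ergodic with constants C₀, λ. Then there exists a constant C > 0, depending only on C₀ and λ, such that for every f : Fin m → ℝ with ‖f‖_∞ ≤ 1, every x ∈ ℝⁿ and all coordinates k, l: sup over t ≥ 0 and i ∈ Fin m of |∂_{x_k}∂_{x_l} (P^x_t f)(i)| is at most C · ( ‖∂_{x_k} Q(x)‖_ℓ · ‖∂_{x_l} Q(x)‖_ℓ + ‖∂_{x_k}∂_{x_l} Q(x)‖_ℓ ). -/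

import Mathlib

open MeasureTheory

noncomputable section

/-- ℓ-norm of a matrix: `‖M‖_ℓ = max_i Σⱼ |M i j|`. -/
def lnorm {m : ℕ} (M : Matrix (Fin m) (Fin m) ℝ) : ℝ := ⨆ i, ∑ j, |M i j|

/-- Entrywise partial derivative `∂_{x_k} Q(x)`. -/
def matPartialDeriv {n m : ℕ} (Q : EuclideanSpace ℝ (Fin n) → Matrix (Fin m) (Fin m) ℝ)
    (k : Fin n) (x : EuclideanSpace ℝ (Fin n)) : Matrix (Fin m) (Fin m) ℝ :=
  Matrix.of fun i j => fderiv ℝ (fun y => Q y i j) x (EuclideanSpace.single k 1)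

/-- Entrywise second partial derivative `∂_{x_k}∂_{x_l} Q(x)`. -/
def matPartialDeriv₂ {n m : ℕ} (Q : EuclideanSpace ℝ (Fin n) → Matrix (Fin m) (Fin m) ℝ)
    (k l : Fin n) (x : EuclideanSpace ℝ (Fin n)) : Matrix (Fin m) (Fin m) ℝ :=
  Matrix.of fun i j =>
    fderiv ℝ (fun y => fderiv ℝ (fun z => Q z i j) y (EuclideanSpace.single l 1)) x
      (EuclideanSpace.single k 1)

open NormedSpace
section Aux
attribute [local instance] Matrix.linftyOpSemiNormedRing Matrix.linftyOpNormedRing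
  Matrix.linftyOpNormedAlgebra
set_option linter.unusedSectionVars false
set_option linter.unusedVariables false
variable {m : ℕ}
lemma row_sum_le_norm (M : Matrix (Fin m) (Fin m) ℝ) (i : Fin m) :
    ∑ j, |M i j| ≤ ‖M‖ := by
  rw [Matrix.linfty_opNorm_def]
  have : ∑ j, |M i j| = ((∑ j, ‖M i j‖₊ : NNReal) : ℝ) := by
    simp [NNReal.coe_sum, Real.norm_eq_abs, coe_nnnorm]
  rw [this]
  exact NNReal.coe_le_coe.2 (Finset.le_sup (f := fun i => ∑ j, ‖M i j‖₊) (Finset.mem_univ i))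

lemma norm_le_of_row_sums {M : Matrix (Fin m) (Fin m) ℝ} {c : ℝ} (hc : 0 ≤ c)
    (h : ∀ i, ∑ j, |M i j| ≤ c) : ‖M‖ ≤ c := by
  rw [Matrix.linfty_opNorm_def]
  have : ∀ i : Fin m, (∑ j, ‖M i j‖₊ : NNReal) ≤ c.toNNReal := by
    intro i
    rw [← NNReal.coe_le_coe]
    push_cast
    simpa [Real.coe_toNNReal c hc, Real.norm_eq_abs] using h i
  calc ((Finset.univ.sup fun i => ∑ j, ‖M i j‖₊ : NNReal) : ℝ)
      ≤ (c.toNNReal : ℝ) := NNReal.coe_le_coe.2 (Finset.sup_le fun i _ => this i)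
    _ = c := Real.coe_toNNReal c hc

lemma entry_le_norm (M : Matrix (Fin m) (Fin m) ℝ) (i j : Fin m) : |M i j| ≤ ‖M‖ :=
  le_trans (Finset.single_le_sum (f := fun j => |M i j|) (fun _ _ => abs_nonneg _)
    (Finset.mem_univ j)) (row_sum_le_norm M i)

/-- entry evaluation as a CLM -/
def entryCLM (i j : Fin m) : Matrix (Fin m) (Fin m) ℝ →L[ℝ] ℝ :=
  LinearMap.mkContinuous
    { toFun := fun M => M i j
      map_add' := fun _ _ => rfl
      map_smul' := fun _ _ => rfl } 1
    (fun M => by rw [one_mul, Real.norm_eq_abs]; exact entry_le_norm M i j)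

@[simp] lemma entryCLM_apply (i j : Fin m) (M : Matrix (Fin m) (Fin m) ℝ) :
    entryCLM i j M = M i j := rfl


variable {𝔸 : Type*} [NormedRing 𝔸] [NormedAlgebra ℝ 𝔸] [CompleteSpace 𝔸]


lemma expF_contDiff : ContDiff ℝ (⊤ : ℕ∞) (fun p : ℝ × 𝔸 => exp (p.1 • p.2)) := by
  have h1 : ContDiff ℝ (⊤ : ℕ∞) (NormedSpace.exp : 𝔸 → 𝔸) :=
    contDiff_iff_contDiffAt.2 fun x => (NormedSpace.exp_analytic (𝕂 := ℝ) x).contDiffAt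
  exact h1.comp (contDiff_fst.smul contDiff_snd)

lemma expF_diff : Differentiable ℝ (fun p : ℝ × 𝔸 => exp (p.1 • p.2)) :=
  expF_contDiff.differentiable (by simp)

/-- full derivative of ExpF -/
def DE : ℝ × 𝔸 → (ℝ × 𝔸 →L[ℝ] 𝔸) := fderiv ℝ (fun p : ℝ × 𝔸 => exp (p.1 • p.2))

lemma DE_contDiff : ContDiff ℝ (⊤ : ℕ∞) (DE (𝔸 := 𝔸)) :=
  expF_contDiff.fderiv_right (by simp)

-- partial derivative in the scalar variable, as HasDerivAt
lemma hasDerivAt_section1 {N : Type*} [NormedAddCommGroup N] [NormedSpace ℝ N]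
    (φ : ℝ × 𝔸 → N) {s : ℝ} {B : 𝔸} (hφ : DifferentiableAt ℝ φ (s, B)) :
    HasDerivAt (fun s' => φ (s', B)) (fderiv ℝ φ (s, B) (1, 0)) s := by
  have h := hφ.hasFDerivAt.comp_hasDerivAt s ((hasDerivAt_id s).prodMk (hasDerivAt_const s B))
  exact h

-- partial derivative in the 𝔸 variable
lemma partialB {N : Type*} [NormedAddCommGroup N] [NormedSpace ℝ N]
    (φ : ℝ × 𝔸 → N) {s : ℝ} {B : 𝔸} (hφ : DifferentiableAt ℝ φ (s, B)) (V : 𝔸) :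
    fderiv ℝ (fun B' => φ (s, B')) B V = fderiv ℝ φ (s, B) (0, V) := by
  have h : HasFDerivAt (fun B' => φ (s, B'))
      ((fderiv ℝ φ (s, B)).comp ((0 : 𝔸 →L[ℝ] ℝ).prod (ContinuousLinearMap.id ℝ 𝔸))) B :=
    hφ.hasFDerivAt.comp B ((hasFDerivAt_const s B).prodMk (hasFDerivAt_id B))
  rw [h.fderiv]; rfl

lemma fderiv_clm_const_apply {X N Y : Type*} [NormedAddCommGroup X] [NormedSpace ℝ X]
    [NormedAddCommGroup N] [NormedSpace ℝ N] [NormedAddCommGroup Y] [NormedSpace ℝ Y]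
    {c : X → (Y →L[ℝ] N)} {x : X} (hc : DifferentiableAt ℝ c x) (v : Y) (w : X) :
    fderiv ℝ (fun x' => c x' v) x w = (fderiv ℝ c x w) v := by
  rw [fderiv_clm_apply hc (differentiableAt_const v)]
  simp

lemma DE_one_zero (p : ℝ × 𝔸) : DE p (1, 0) = p.2 * exp (p.1 • p.2) := by
  have h1 : HasDerivAt (fun s' => exp (s' • p.2)) (DE p (1, 0)) p.1 :=
    hasDerivAt_section1 (fun p : ℝ × 𝔸 => exp (p.1 • p.2)) (s := p.1) (B := p.2) (expF_diff _)
  exact h1.unique (hasDerivAt_exp_smul_const' p.2 p.1)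

/-- directional partial derivative of ExpF in the algebra variable -/
def psi (V : 𝔸) : ℝ × 𝔸 → 𝔸 := fun p => DE p (0, V)

lemma psi_contDiff (V : 𝔸) : ContDiff ℝ (⊤ : ℕ∞) (psi V) :=
  DE_contDiff.clm_apply contDiff_const

lemma psi_eq_partial (V : 𝔸) (s : ℝ) (B : 𝔸) :
    psi V (s, B) = fderiv ℝ (fun B' => exp (s • B')) B V :=
  (partialB _ (expF_diff _) V).symm

lemma psi_zero (V B : 𝔸) : psi V (0, B) = 0 := by
  rw [psi_eq_partial]
  have : (fun B' : 𝔸 => exp ((0:ℝ) • B')) = fun _ => (1 : 𝔸) := by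
    funext B'; simp [exp_zero]
  rw [this, fderiv_fun_const]
  simp

/-- second directional partial derivative -/
def phi (W V : 𝔸) : ℝ × 𝔸 → 𝔸 := fun p => fderiv ℝ (psi V) p (0, W)

/-- the key derivative-swap lemma -/
lemma GEN {g h : ℝ × 𝔸 → 𝔸} (hg : ContDiff ℝ (⊤ : ℕ∞) g)
    (hgh : ∀ p, fderiv ℝ g p (1, 0) = h p) (hh : Differentiable ℝ h)
    (s : ℝ) (B : 𝔸) (W : 𝔸) :
    HasDerivAt (fun s' => fderiv ℝ g (s', B) (0, W)) (fderiv ℝ h (s, B) (0, W)) s := by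
  have hDg : ContDiff ℝ (⊤ : ℕ∞) (fderiv ℝ g) := hg.fderiv_right (by simp)
  have hDgd : Differentiable ℝ (fderiv ℝ g) := hDg.differentiable (by simp)
  have step1 : HasDerivAt (fun s' => fderiv ℝ g (s', B) (0, W))
      (fderiv ℝ (fun p => fderiv ℝ g p (0, W)) (s, B) (1, 0)) s :=
    hasDerivAt_section1 _ ((hDgd.differentiableAt).clm_apply (differentiableAt_const _))
  have step2 : fderiv ℝ (fun p => fderiv ℝ g p (0, W)) (s, B) (1, 0)
      = fderiv ℝ (fderiv ℝ g) (s, B) (1, 0) (0, W) :=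
    fderiv_clm_const_apply hDgd.differentiableAt _ _
  have step3 : fderiv ℝ (fderiv ℝ g) (s, B) (1, 0) (0, W)
      = fderiv ℝ (fderiv ℝ g) (s, B) (0, W) (1, 0) :=
    (hg.contDiffAt.isSymmSndFDerivAt (by rw [minSmoothness_of_isRCLikeNormedField]; exact WithTop.coe_le_coe.2 (le_top : (2:ℕ∞) ≤ ⊤))).eq _ _
  have step4 : fderiv ℝ (fderiv ℝ g) (s, B) (0, W) (1, 0)
      = fderiv ℝ (fun p => fderiv ℝ g p (1, 0)) (s, B) (0, W) :=
    (fderiv_clm_const_apply hDgd.differentiableAt _ _).symm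
  have step5 : (fun p : ℝ × 𝔸 => fderiv ℝ g p (1, 0)) = h := funext hgh
  rw [step2, step3, step4, step5] at step1
  exact step1

lemma fderiv_mulE (p : ℝ × 𝔸) (u : ℝ × 𝔸) :
    fderiv ℝ (fun q : ℝ × 𝔸 => q.2 * exp (q.1 • q.2)) p u
      = u.2 * exp (p.1 • p.2) + p.2 * DE p u := by
  have h : HasFDerivAt (fun q : ℝ × 𝔸 => q.2 * exp (q.1 • q.2))
      _ p := (hasFDerivAt_snd (E := ℝ) (F := 𝔸)).mul' (expF_diff p).hasFDerivAt
  rw [h.fderiv]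
  simp [DE]
  abel

/-- the basic ODE for psi -/
lemma psi_hasDerivAt (V : 𝔸) (s : ℝ) (B : 𝔸) :
    HasDerivAt (fun s' => psi V (s', B))
      (V * exp (s • B) + B * psi V (s, B)) s := by
  have h := GEN (g := fun p : ℝ × 𝔸 => exp (p.1 • p.2))
      (h := fun q : ℝ × 𝔸 => q.2 * exp (q.1 • q.2)) expF_contDiff
      (fun p => DE_one_zero p)
      (((differentiable_snd).mul expF_diff)) s B V
  have e2 : fderiv ℝ (fun q : ℝ × 𝔸 => q.2 * exp (q.1 • q.2)) (s, B) (0, V)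
      = V * exp (s • B) + B * psi V (s, B) := by
    rw [fderiv_mulE]; rfl
  rw [e2] at h
  exact h

/-- identity: the (1,0)-partial of psi -/
lemma psi_one_zero (V : 𝔸) (p : ℝ × 𝔸) :
    fderiv ℝ (psi V) p (1, 0) = V * exp (p.1 • p.2) + p.2 * psi V p := by
  have h1 : HasDerivAt (fun s' => psi V (s', p.2)) (fderiv ℝ (psi V) p (1, 0)) p.1 :=
    hasDerivAt_section1 _ ((psi_contDiff V).differentiable (by simp)).differentiableAt
  exact h1.unique (psi_hasDerivAt V p.1 p.2)

/-- the ODE for phi -/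
lemma phi_hasDerivAt (W V : 𝔸) (s : ℝ) (B : 𝔸) :
    HasDerivAt (fun s' => phi W V (s', B))
      (V * psi W (s, B) + W * psi V (s, B) + B * phi W V (s, B)) s := by
  have hpsiD : Differentiable ℝ (psi V) := (psi_contDiff V).differentiable (by simp)
  have h := GEN (g := psi V)
      (h := fun p : ℝ × 𝔸 => V * exp (p.1 • p.2) + p.2 * psi V p) (psi_contDiff V)
      (fun p => psi_one_zero V p)
      ((differentiable_const V).mul expF_diff |>.add (differentiable_snd.mul hpsiD)) s B W
  have e : fderiv ℝ (fun p : ℝ × 𝔸 => V * exp (p.1 • p.2) + p.2 * psi V p) (s, B) (0, W)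
      = V * psi W (s, B) + W * psi V (s, B) + B * phi W V (s, B) := by
    have d1 : HasFDerivAt (fun p : ℝ × 𝔸 => V * exp (p.1 • p.2) + p.2 * psi V p)
        _ (s, B) :=
      (((expF_diff (s, B)).hasFDerivAt).const_mul V).add
        ((hasFDerivAt_snd).mul' (hpsiD (s, B)).hasFDerivAt)
    rw [d1.fderiv]
    simp [DE, psi, phi]
    ring_nf
    abel
  rw [e] at h
  exact h

lemma phi_zero (W V : 𝔸) (B : 𝔸) : phi W V (0, B) = 0 := by
  have hpsiD : Differentiable ℝ (psi V) := (psi_contDiff V).differentiable (by simp)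
  have h : phi W V (0, B) = fderiv ℝ (fun B' => psi V (0, B')) B W :=
    (partialB (psi V) hpsiD.differentiableAt W).symm
  rw [h]
  have : (fun B' : 𝔸 => psi V (0, B')) = fun _ => (0 : 𝔸) := by
    funext B'; exact psi_zero V B'
  rw [this, fderiv_fun_const]
  simp

lemma exp_continuous' : Continuous (NormedSpace.exp : 𝔸 → 𝔸) :=
  (contDiff_iff_contDiffAt.2 fun x => (NormedSpace.exp_analytic (𝕂 := ℝ) x).contDiffAt
    : ContDiff ℝ (⊤ : ℕ∞) _).continuous

/-- Duhamel / variation of constants formula -/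
lemma duhamel (B₀ : 𝔸) (u h : ℝ → 𝔸) (hu : ∀ s, HasDerivAt u (h s + B₀ * u s) s)
    (hh : Continuous h) (hu0 : u 0 = 0) (t : ℝ) :
    u t = ∫ s in (0:ℝ)..t, exp ((t - s) • B₀) * h s := by
  have hP : ∀ s : ℝ, HasDerivAt (fun s' : ℝ => exp ((t - s') • B₀))
      (-(B₀ * exp ((t - s) • B₀))) s := by
    intro s
    have h1 : HasDerivAt (fun r : ℝ => exp (r • B₀)) (B₀ * exp ((t - s) • B₀)) (t - s) :=
      hasDerivAt_exp_smul_const' B₀ (t - s)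
    have h2 : HasDerivAt (fun s' : ℝ => t - s') (-1 : ℝ) s := (hasDerivAt_id s).const_sub t
    have h3 := h1.scomp s h2
    simpa [Function.comp_def] using h3
  have hg : ∀ s, HasDerivAt (fun s' => exp ((t - s') • B₀) * u s')
      (exp ((t - s) • B₀) * h s) s := by
    intro s
    have hcomm : exp ((t - s) • B₀) * B₀ = B₀ * exp ((t - s) • B₀) :=
      (((Commute.refl B₀).smul_left (t - s)).exp_left).eq
    have h4 := (hP s).mul (hu s)
    convert h4 using 1
    · rfl
    rw [mul_add, ← mul_assoc, hcomm, neg_mul, mul_assoc]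
    abel
  have hcont : Continuous fun s => exp ((t - s) • B₀) * h s :=
    ((exp_continuous'.comp (by fun_prop : Continuous fun s : ℝ => (t - s) • B₀))).mul hh
  have hFTC := intervalIntegral.integral_eq_sub_of_hasDerivAt
      (f := fun s' => exp ((t - s') • B₀) * u s') (fun s _ => hg s)
      (hcont.intervalIntegrable 0 t)
  rw [hFTC]
  simp [hu0, exp_zero]

lemma integral_exp_neg_le (c t : ℝ) (hc : 0 < c) (ht : 0 ≤ t) :
    ∫ s in (0:ℝ)..t, Real.exp (-(c * s)) ≤ 1 / c := by
  have hF : ∀ s : ℝ, HasDerivAt (fun s' : ℝ => -(1 / c) * Real.exp (-(c * s')))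
      (Real.exp (-(c * s))) s := by
    intro s
    have h1 : HasDerivAt (fun s' : ℝ => -(c * s')) (-c) s := by
      have h0 := ((hasDerivAt_id s).const_mul c).neg; simp only [mul_one] at h0; exact h0
    have h2 := (Real.hasDerivAt_exp (-(c * s))).comp s h1
    have h3 := h2.const_mul (-(1 / c))
    exact h3.congr_deriv (by field_simp)
  have hFTC := intervalIntegral.integral_eq_sub_of_hasDerivAt
      (f := fun s' : ℝ => -(1 / c) * Real.exp (-(c * s'))) (fun s _ => hF s)
      ((by fun_prop : Continuous fun s : ℝ => Real.exp (-(c * s))).intervalIntegrable 0 t)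
  rw [hFTC]
  have h5 : 0 ≤ Real.exp (-(c * t)) := (Real.exp_pos _).le
  have h6 : Real.exp (-(c * 0)) = 1 := by norm_num
  have hc' : 0 < 1 / c := by positivity
  rw [show -(c*(0:ℝ)) = 0 by ring, Real.exp_zero]
  nlinarith

lemma norm_intervalIntegral_le {f : ℝ → 𝔸} {g : ℝ → ℝ} {t : ℝ} (ht : 0 ≤ t)
    (h : ∀ s, 0 ≤ s → s ≤ t → ‖f s‖ ≤ g s) (hg : Continuous g) :
    ‖∫ s in (0:ℝ)..t, f s‖ ≤ ∫ s in (0:ℝ)..t, g s := by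
  have h1 : ∀ᵐ s ∂(MeasureTheory.volume.restrict (Set.uIoc 0 t)), ‖f s‖ ≤ g s := by
    refine (MeasureTheory.ae_restrict_mem measurableSet_uIoc).mono fun s hs => ?_
    rw [Set.uIoc_of_le ht] at hs
    exact h s hs.1.le hs.2
  exact intervalIntegral.norm_integral_le_of_norm_le ht
    (Filter.Eventually.of_forall fun s hs => h s hs.1.le hs.2) (hg.intervalIntegrable 0 t)

lemma hasFDerivAt_section2 {N : Type*} [NormedAddCommGroup N] [NormedSpace ℝ N]
    (φ : ℝ × 𝔸 → N) {s : ℝ} {B : 𝔸} (hφ : DifferentiableAt ℝ φ (s, B)) :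
    HasFDerivAt (fun B' => φ (s, B'))
      ((fderiv ℝ φ (s, B)).comp ((0 : 𝔸 →L[ℝ] ℝ).prod (ContinuousLinearMap.id ℝ 𝔸))) B :=
  hφ.hasFDerivAt.comp B ((hasFDerivAt_const s B).prodMk (hasFDerivAt_id B))

lemma phi_eq (W V : 𝔸) (p : ℝ × 𝔸) : phi W V p = fderiv ℝ (DE (𝔸 := 𝔸)) p (0, W) (0, V) :=
  fderiv_clm_const_apply (((DE_contDiff (𝔸 := 𝔸)).differentiable (by simp)).differentiableAt) _ _

variable {Ee : Type*} [NormedAddCommGroup Ee] [NormedSpace ℝ Ee]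

lemma F_hasFDerivAt (A : Ee → 𝔸) (hA : Differentiable ℝ A) (s : ℝ) (y : Ee) :
    HasFDerivAt (fun y' => exp (s • A y'))
      (((DE (s, A y)).comp
        ((0 : 𝔸 →L[ℝ] ℝ).prod (ContinuousLinearMap.id ℝ 𝔸))).comp (fderiv ℝ A y)) y :=
  (hasFDerivAt_section2 _ (expF_diff (s, A y))).comp y (hA y).hasFDerivAt

lemma F_fderiv_apply (A : Ee → 𝔸) (hA : Differentiable ℝ A) (s : ℝ) (y : Ee) (v : Ee) :
    fderiv ℝ (fun y' => exp (s • A y')) y v = psi (fderiv ℝ A y v) (s, A y) := by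
  rw [(F_hasFDerivAt A hA s y).fderiv]; rfl

lemma PsiA_fderiv (A Ap : Ee → 𝔸) (hA : Differentiable ℝ A) {x : Ee}
    (hAp : DifferentiableAt ℝ Ap x) (s : ℝ) :
    DifferentiableAt ℝ (fun y => psi (Ap y) (s, A y)) x ∧ ∀ w,
      fderiv ℝ (fun y => psi (Ap y) (s, A y)) x w
        = phi (fderiv ℝ A x w) (Ap x) (s, A x) + psi (fderiv ℝ Ap x w) (s, A x) := by
  have hDEd : DifferentiableAt ℝ (DE (𝔸 := 𝔸)) (s, A x) :=
    ((DE_contDiff (𝔸 := 𝔸)).differentiable (by simp)).differentiableAt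
  have hc : HasFDerivAt (fun y => DE (s, A y))
      (((fderiv ℝ (DE (𝔸 := 𝔸)) (s, A x)).comp
        ((0 : 𝔸 →L[ℝ] ℝ).prod (ContinuousLinearMap.id ℝ 𝔸))).comp (fderiv ℝ A x)) x :=
    (hasFDerivAt_section2 (DE (𝔸 := 𝔸)) hDEd).comp x (hA x).hasFDerivAt
  have hu : HasFDerivAt (fun y => (((0:ℝ), Ap y) : ℝ × 𝔸))
      ((0 : Ee →L[ℝ] ℝ).prod (fderiv ℝ Ap x)) x :=
    (hasFDerivAt_const (0:ℝ) x).prodMk hAp.hasFDerivAt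
  have h := hc.clm_apply hu
  have hfun : (fun y => psi (Ap y) (s, A y)) = fun y => DE (s, A y) (((0:ℝ), Ap y)) := rfl
  refine ⟨hfun ▸ h.differentiableAt, fun w => ?_⟩
  rw [hfun, h.fderiv]
  have h1 : phi (fderiv ℝ A x w) (Ap x) (s, A x)
      = fderiv ℝ (DE (𝔸 := 𝔸)) (s, A x) (0, fderiv ℝ A x w) (0, Ap x) := phi_eq _ _ _
  simp only [ContinuousLinearMap.add_apply, ContinuousLinearMap.comp_apply,
    ContinuousLinearMap.flip_apply, ContinuousLinearMap.prod_apply,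
    ContinuousLinearMap.zero_apply, ContinuousLinearMap.coe_id', id_eq, h1]
  rw [add_comm]
  rfl

variable {m : ℕ}

lemma fderiv_entry {E : Type*} [NormedAddCommGroup E] [NormedSpace ℝ E]
    {g : E → Matrix (Fin m) (Fin m) ℝ} {y : E} (hg : DifferentiableAt ℝ g y) (v : E)
    (i j : Fin m) :
    fderiv ℝ (fun y' => g y' i j) y v = (fderiv ℝ g y v) i j := by
  have h : HasFDerivAt (fun y' => g y' i j) ((entryCLM i j).comp (fderiv ℝ g y)) y :=
    (entryCLM i j).hasFDerivAt.comp y hg.hasFDerivAt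
  rw [h.fderiv]; rfl

lemma lnorm_eq_norm [Nonempty (Fin m)] (N : Matrix (Fin m) (Fin m) ℝ) : lnorm N = ‖N‖ := by
  have hbdd : BddAbove (Set.range fun i => ∑ j, |N i j|) :=
    Set.Finite.bddAbove (Set.finite_range _)
  refine le_antisymm (ciSup_le fun i => row_sum_le_norm N i) ?_
  refine norm_le_of_row_sums ?_ (fun i => le_ciSup hbdd i)
  obtain ⟨i⟩ := ‹Nonempty (Fin m)›
  exact le_trans (Finset.sum_nonneg fun j _ => abs_nonneg _) (le_ciSup hbdd i)

/-- identity map from pi-type to matrices as a CLM -/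
def matCLM : (Fin m → Fin m → ℝ) →L[ℝ] Matrix (Fin m) (Fin m) ℝ :=
  LinearMap.mkContinuous
    { toFun := fun v => Matrix.of v
      map_add' := fun _ _ => rfl
      map_smul' := fun _ _ => rfl } m
    (fun v => by
      refine norm_le_of_row_sums (by positivity) (fun i => ?_)
      calc ∑ j, |Matrix.of v i j| ≤ ∑ _j : Fin m, ‖v‖ := by
            refine Finset.sum_le_sum (fun j _ => ?_)
            calc |Matrix.of v i j| = ‖v i j‖ := rfl
              _ ≤ ‖v i‖ := norm_le_pi_norm (v i) j
              _ ≤ ‖v‖ := norm_le_pi_norm v i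
        _ = (m : ℝ) * ‖v‖ := by simp [mul_comm])

lemma contDiff_matrix {n : ℕ} {Q : EuclideanSpace ℝ (Fin n) → Matrix (Fin m) (Fin m) ℝ}
    (hQ : ∀ i j, ContDiff ℝ 2 fun x => Q x i j) : ContDiff ℝ 2 Q := by
  have h := (matCLM.contDiff (n := 2)).comp
    (contDiff_pi.2 fun i => contDiff_pi.2 fun j => hQ i j)
  have hco : (⇑(matCLM (m := m)) ∘ fun (y : EuclideanSpace ℝ (Fin n)) (i j : Fin m) => Q y i j)
      = Q := by funext y; rfl
  exact h

lemma tepow {lam : ℝ} (hlam : 0 < lam) (s : ℝ) (hs : 0 ≤ s) :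
    s * Real.exp (-(lam * s)) ≤ (2 / lam) * Real.exp (-(lam / 2 * s)) := by
  have h1 : lam / 2 * s ≤ Real.exp (lam / 2 * s) := by
    have := Real.add_one_le_exp (lam / 2 * s); linarith
  have h2 : Real.exp (-(lam * s)) = Real.exp (-(lam / 2 * s)) * Real.exp (-(lam / 2 * s)) := by
    rw [← Real.exp_add]; ring_nf
  have h3 : Real.exp (-(lam / 2 * s)) * Real.exp (lam / 2 * s) = 1 := by
    rw [← Real.exp_add]; simp
  have h4 : (0:ℝ) < Real.exp (-(lam / 2 * s)) := Real.exp_pos _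
  have h6 : lam / 2 * s * Real.exp (-(lam / 2 * s)) ≤ 1 := by
    nlinarith [mul_le_mul_of_nonneg_right h1 h4.le]
  have hl : (0:ℝ) < 2 / lam := by positivity
  have h5 : s * Real.exp (-(lam / 2 * s)) ≤ 2 / lam := by
    have key : s * Real.exp (-(lam / 2 * s))
        = (2 / lam) * (lam / 2 * s * Real.exp (-(lam / 2 * s))) := by
      field_simp
    rw [key]
    calc (2 / lam) * (lam / 2 * s * Real.exp (-(lam / 2 * s)))
        ≤ (2 / lam) * 1 := mul_le_mul_of_nonneg_left h6 hl.le
      _ = 2 / lam := mul_one _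
  calc s * Real.exp (-(lam * s))
      = (s * Real.exp (-(lam / 2 * s))) * Real.exp (-(lam / 2 * s)) := by rw [h2]; ring
    _ ≤ (2 / lam) * Real.exp (-(lam / 2 * s)) := mul_le_mul_of_nonneg_right h5 h4.le

lemma integral_cexp_le (c c2 t : ℝ) (hc : 0 ≤ c) (hc2 : 0 < c2) (ht : 0 ≤ t) :
    ∫ s in (0:ℝ)..t, c * Real.exp (-(c2 * s)) ≤ c / c2 := by
  rw [intervalIntegral.integral_const_mul]
  calc c * ∫ s in (0:ℝ)..t, Real.exp (-(c2 * s))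
      ≤ c * (1 / c2) := mul_le_mul_of_nonneg_left (integral_exp_neg_le c2 t hc2 ht) hc
    _ = c / c2 := by ring

set_option maxHeartbeats 1000000 in
theorem semigroup_bound_aux (C₀ lam : ℝ) (hC₀ : 0 < C₀) (hlam : 0 < lam)
    (n m : ℕ) (Q : EuclideanSpace ℝ (Fin n) → Matrix (Fin m) (Fin m) ℝ)
    (μ : EuclideanSpace ℝ (Fin n) → Fin m → ℝ)
    (hrow : ∀ x i, ∑ j, Q x i j = 0)
    (hQC : ∀ i j, ContDiff ℝ 2 fun x => Q x i j)
    (hμpos : ∀ x i, 0 < μ x i)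
    (hμ1 : ∀ x, ∑ i, μ x i = 1)
    (herg : ∀ x i (t : ℝ), 0 ≤ t →
      ∑ j, |NormedSpace.exp (t • Q x) i j - μ x j| ≤ C₀ * Real.exp (-lam * t))
    (f : Fin m → ℝ) (hf : ∀ i, |f i| ≤ 1)
    (x : EuclideanSpace ℝ (Fin n)) (k l : Fin n) (t : ℝ) (ht : 0 ≤ t) (i : Fin m) :
    |fderiv ℝ (fun y =>
        fderiv ℝ (fun z => (NormedSpace.exp (t • Q z)).mulVec f i) y
          (EuclideanSpace.single l 1)) x (EuclideanSpace.single k 1)|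
      ≤ ((1 + C₀) * C₀ / lam + 8 * (1 + C₀) * C₀ ^ 2 / lam ^ 2) *
        (lnorm (matPartialDeriv Q k x) * lnorm (matPartialDeriv Q l x)
          + lnorm (matPartialDeriv₂ Q k l x)) := by
  classical
  have hm : m ≠ 0 := by
    intro h; subst h; simpa using hμ1 x
  haveI : Nonempty (Fin m) := ⟨⟨0, Nat.pos_of_ne_zero hm⟩⟩
  set vl := EuclideanSpace.single l (1:ℝ) with hvl
  set vk := EuclideanSpace.single k (1:ℝ) with hvk
  have hQ2 : ContDiff ℝ 2 Q := contDiff_matrix hQC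
  have hQd : Differentiable ℝ Q := hQ2.differentiable (by norm_num)
  set Ap : EuclideanSpace ℝ (Fin n) → Matrix (Fin m) (Fin m) ℝ :=
    fun y => fderiv ℝ Q y vl with hAp
  have hApC : ContDiff ℝ 1 Ap :=
    (hQ2.fderiv_right (by norm_num)).clm_apply contDiff_const
  have hApd : Differentiable ℝ Ap := hApC.differentiable (by norm_num)
  set B₀ := Q x with hB₀
  set Vm := Ap x with hVm
  set Wm := fderiv ℝ Q x vk with hWm
  set Um := fderiv ℝ Ap x vk with hUm
  set Es : ℝ → Matrix (Fin m) (Fin m) ℝ := fun s => NormedSpace.exp (s • B₀) with hEs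
  have hEc : Continuous Es := exp_continuous'.comp (by fun_prop)
  -- row sums of derivative matrices vanish
  have hrowD : ∀ (y) (v : EuclideanSpace ℝ (Fin n)) i0, ∑ j, (fderiv ℝ Q y v) i0 j = 0 := by
    intro y v i0
    have h1 : ∀ j, (fderiv ℝ Q y v) i0 j = fderiv ℝ (fun z => Q z i0 j) y v :=
      fun j => (fderiv_entry (hQd y) v i0 j).symm
    have h2 : fderiv ℝ (fun z => ∑ j, Q z i0 j) y = ∑ j, fderiv ℝ (fun z => Q z i0 j) y :=
      fderiv_fun_sum (fun j _ => ((hQC i0 j).differentiable (by norm_num)).differentiableAt)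
    have h3 : (fun z => ∑ j, Q z i0 j) = fun _ => (0:ℝ) := funext fun z => hrow z i0
    calc ∑ j, (fderiv ℝ Q y v) i0 j = ∑ j, fderiv ℝ (fun z => Q z i0 j) y v := by
          exact Finset.sum_congr rfl (fun j _ => h1 j)
      _ = (∑ j, fderiv ℝ (fun z => Q z i0 j) y) v :=
          (ContinuousLinearMap.sum_apply _ _ _).symm
      _ = fderiv ℝ (fun z => ∑ j, Q z i0 j) y v := by rw [h2]
      _ = 0 := by rw [h3]; simp
  have hrowVm : ∀ i0, ∑ j, Vm i0 j = 0 := fun i0 => hrowD x vl i0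
  have hrowWm : ∀ i0, ∑ j, Wm i0 j = 0 := fun i0 => hrowD x vk i0
  have hrowU : ∀ i0, ∑ j, Um i0 j = 0 := by
    intro i0
    have h1 : ∀ j, Um i0 j = fderiv ℝ (fun y => Ap y i0 j) x vk :=
      fun j => (fderiv_entry (hApd x) vk i0 j).symm
    have h2 : fderiv ℝ (fun y => ∑ j, Ap y i0 j) x = ∑ j, fderiv ℝ (fun y => Ap y i0 j) x :=
      fderiv_fun_sum (fun j _ => ((entryCLM i0 j).differentiable.comp hApd).differentiableAt)
    have h3 : (fun y => ∑ j, Ap y i0 j) = fun _ => (0:ℝ) := funext fun y => hrowD y vl i0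
    calc ∑ j, Um i0 j = ∑ j, fderiv ℝ (fun y => Ap y i0 j) x vk :=
          Finset.sum_congr rfl (fun j _ => h1 j)
      _ = (∑ j, fderiv ℝ (fun y => Ap y i0 j) x) vk :=
          (ContinuousLinearMap.sum_apply _ _ _).symm
      _ = fderiv ℝ (fun y => ∑ j, Ap y i0 j) x vk := by rw [h2]
      _ = 0 := by rw [h3]; simp
  -- identification with matPartialDeriv
  have hWm_eq : Wm = matPartialDeriv Q k x := by
    ext i0 j
    simp only [matPartialDeriv, Matrix.of_apply, hWm]
    exact (fderiv_entry (hQd x) vk i0 j).symm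
  have hVm_eq : Vm = matPartialDeriv Q l x := by
    ext i0 j
    simp only [matPartialDeriv, Matrix.of_apply, hVm, hAp]
    exact (fderiv_entry (hQd x) vl i0 j).symm
  have hUm_eq : Um = matPartialDeriv₂ Q k l x := by
    ext i0 j
    simp only [matPartialDeriv₂, Matrix.of_apply, hUm]
    have h1 : Um i0 j = fderiv ℝ (fun y => Ap y i0 j) x vk :=
      (fderiv_entry (hApd x) vk i0 j).symm
    have h2 : (fun y => Ap y i0 j) = fun y => fderiv ℝ (fun z => Q z i0 j) y vl :=
      funext fun y => fderiv_entry (hQd y) vl i0 j |>.symm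
    rw [← hUm, h1, h2]
  -- the invariant-measure matrix
  set PiM : Matrix (Fin m) (Fin m) ℝ := Matrix.of (fun _ j => μ x j) with hPiM
  have hPiN : ‖PiM‖ ≤ 1 := by
    refine norm_le_of_row_sums zero_le_one (fun i0 => ?_)
    have : ∀ j, |PiM i0 j| = μ x j := fun j => abs_of_pos (hμpos x j)
    rw [Finset.sum_congr rfl (fun j _ => this j)]
    exact le_of_eq (hμ1 x)
  have hEP : ∀ s, 0 ≤ s → ‖Es s - PiM‖ ≤ C₀ * Real.exp (-(lam * s)) := by
    intro s hs
    refine norm_le_of_row_sums (by positivity) (fun i0 => ?_)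
    have h := herg x i0 s hs
    rw [neg_mul] at h
    simpa [Matrix.sub_apply, hEs, hPiM, hB₀] using h
  have hEb : ∀ s, 0 ≤ s → ‖Es s‖ ≤ 1 + C₀ := by
    intro s hs
    have h1 : ‖Es s‖ ≤ ‖Es s - PiM‖ + ‖PiM‖ := by
      have h := norm_add_le (Es s - PiM) PiM; simpa using h
    have h2 : Real.exp (-(lam * s)) ≤ 1 := by
      rw [Real.exp_le_one_iff]; nlinarith
    nlinarith [hEP s hs]
  have hmulPi : ∀ (N : Matrix (Fin m) (Fin m) ℝ), (∀ i0, ∑ j, N i0 j = 0) → N * PiM = 0 := by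
    intro N hN
    ext i0 j
    rw [Matrix.mul_apply]
    simp only [hPiM, Matrix.of_apply]
    rw [← Finset.sum_mul, hN i0, zero_mul, Matrix.zero_apply]
  have hdecay : ∀ (N : Matrix (Fin m) (Fin m) ℝ), (∀ i0, ∑ j, N i0 j = 0) →
      ∀ s, 0 ≤ s → ‖N * Es s‖ ≤ ‖N‖ * (C₀ * Real.exp (-(lam * s))) := by
    intro N hN s hs
    have h1 : N * Es s = N * (Es s - PiM) := by
      rw [mul_sub, hmulPi N hN, sub_zero]
    rw [h1]
    calc ‖N * (Es s - PiM)‖ ≤ ‖N‖ * ‖Es s - PiM‖ := norm_mul_le _ _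
      _ ≤ ‖N‖ * (C₀ * Real.exp (-(lam * s))) :=
          mul_le_mul_of_nonneg_left (hEP s hs) (norm_nonneg N)
  -- continuity in time of psi sections
  have hψc : ∀ (Vv : Matrix (Fin m) (Fin m) ℝ), Continuous fun s => psi Vv (s, B₀) :=
    fun Vv => (psi_contDiff Vv).continuous.comp (by fun_prop)
  -- Duhamel representations
  have hψrep : ∀ (Vv : Matrix (Fin m) (Fin m) ℝ) (s : ℝ),
      psi Vv (s, B₀) = ∫ r in (0:ℝ)..s, NormedSpace.exp ((s - r) • B₀) * (Vv * Es r) :=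
    fun Vv s => duhamel B₀ (fun r => psi Vv (r, B₀)) (fun r => Vv * Es r)
      (fun r => psi_hasDerivAt Vv r B₀) (continuous_const.mul hEc) (psi_zero Vv B₀) s
  -- decay of cross terms
  have hcross : ∀ (Nw Nv : Matrix (Fin m) (Fin m) ℝ),
      (∀ i0, ∑ j, Nw i0 j = 0) → (∀ i0, ∑ j, Nv i0 j = 0) →
      ∀ s, 0 ≤ s → ‖Nw * psi Nv (s, B₀)‖
        ≤ (‖Nw‖ * ‖Nv‖ * C₀ ^ 2 * (2 / lam)) * Real.exp (-(lam / 2 * s)) := by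
    intro Nw Nv hNw hNv s hs
    have hint :=
      ((exp_continuous'.comp (by fun_prop : Continuous fun r : ℝ => (s - r) • B₀)).mul
        (continuous_const.mul hEc : Continuous fun r => Nv * Es r)).intervalIntegrable (μ := MeasureTheory.volume) 0 s
    have h1 : Nw * psi Nv (s, B₀)
        = ∫ r in (0:ℝ)..s, Nw * (NormedSpace.exp ((s - r) • B₀) * (Nv * Es r)) := by
      rw [hψrep Nv s]
      exact ((ContinuousLinearMap.mul ℝ _ Nw).intervalIntegral_comp_comm hint).symm
    rw [h1]
    have h2 : ‖∫ r in (0:ℝ)..s, Nw * (NormedSpace.exp ((s - r) • B₀) * (Nv * Es r))‖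
        ≤ ∫ _r in (0:ℝ)..s, (‖Nw‖ * ‖Nv‖ * C₀ ^ 2) * Real.exp (-(lam * s)) := by
      refine norm_intervalIntegral_le hs (fun r hr hrs => ?_) (by fun_prop)
      have he : Real.exp (-(lam * (s - r))) * Real.exp (-(lam * r)) = Real.exp (-(lam * s)) := by
        rw [← Real.exp_add]; ring_nf
      calc ‖Nw * (NormedSpace.exp ((s - r) • B₀) * (Nv * Es r))‖
          = ‖(Nw * Es (s - r)) * (Nv * Es r)‖ := by rw [← mul_assoc]
        _ ≤ ‖Nw * Es (s - r)‖ * ‖Nv * Es r‖ := norm_mul_le _ _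
        _ ≤ (‖Nw‖ * (C₀ * Real.exp (-(lam * (s - r))))) * (‖Nv‖ * (C₀ * Real.exp (-(lam * r)))) := by
            refine mul_le_mul (hdecay Nw hNw (s - r) (by linarith)) (hdecay Nv hNv r hr)
              (norm_nonneg _) (by positivity)
        _ = (‖Nw‖ * ‖Nv‖ * C₀ ^ 2) * (Real.exp (-(lam * (s - r))) * Real.exp (-(lam * r))) := by
            ring
        _ = (‖Nw‖ * ‖Nv‖ * C₀ ^ 2) * Real.exp (-(lam * s)) := by rw [he]
    refine h2.trans ?_
    rw [intervalIntegral.integral_const, smul_eq_mul, sub_zero]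
    have h3 := tepow hlam s hs
    nlinarith [norm_nonneg Nw, norm_nonneg Nv, Real.exp_pos (-(lam / 2 * s)),
      Real.exp_pos (-(lam * s)), mul_le_mul_of_nonneg_left h3
        (by positivity : (0:ℝ) ≤ ‖Nw‖ * ‖Nv‖ * C₀ ^ 2)]
  -- bound for psi Um
  have hψU : ‖psi Um (t, B₀)‖ ≤ ((1 + C₀) * C₀ / lam) * ‖Um‖ := by
    rw [hψrep Um t]
    have h2 : ‖∫ s in (0:ℝ)..t, NormedSpace.exp ((t - s) • B₀) * (Um * Es s)‖
        ≤ ∫ s in (0:ℝ)..t, ((1 + C₀) * ‖Um‖ * C₀) * Real.exp (-(lam * s)) := by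
      refine norm_intervalIntegral_le ht (fun s hs0 hst => ?_) (by fun_prop)
      calc ‖NormedSpace.exp ((t - s) • B₀) * (Um * Es s)‖
          ≤ ‖Es (t - s)‖ * ‖Um * Es s‖ := norm_mul_le _ _
        _ ≤ (1 + C₀) * (‖Um‖ * (C₀ * Real.exp (-(lam * s)))) := by
            refine mul_le_mul (hEb (t - s) (by linarith)) (hdecay Um hrowU s hs0)
              (norm_nonneg _) (by positivity)
        _ = ((1 + C₀) * ‖Um‖ * C₀) * Real.exp (-(lam * s)) := by ring
    refine h2.trans ?_
    refine (integral_cexp_le _ lam t (by positivity) hlam ht).trans ?_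
    apply le_of_eq
    field_simp
  -- bound for phi
  have hφrep : phi Wm Vm (t, B₀) = ∫ s in (0:ℝ)..t,
      NormedSpace.exp ((t - s) • B₀) * (Vm * psi Wm (s, B₀) + Wm * psi Vm (s, B₀)) := by
    refine duhamel B₀ (fun s => phi Wm Vm (s, B₀))
      (fun s => Vm * psi Wm (s, B₀) + Wm * psi Vm (s, B₀)) (fun s => ?_) ?_
      (phi_zero Wm Vm B₀) t
    · have h := phi_hasDerivAt Wm Vm s B₀
      simpa [add_assoc] using h
    · exact (continuous_const.mul (hψc Wm)).add (continuous_const.mul (hψc Vm))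
  have hφ : ‖phi Wm Vm (t, B₀)‖
      ≤ (8 * (1 + C₀) * C₀ ^ 2 / lam ^ 2) * (‖Wm‖ * ‖Vm‖) := by
    rw [hφrep]
    set KK := ‖Wm‖ * ‖Vm‖ * C₀ ^ 2 * (2 / lam) with hKK
    have h2 : ‖∫ s in (0:ℝ)..t, NormedSpace.exp ((t - s) • B₀) *
          (Vm * psi Wm (s, B₀) + Wm * psi Vm (s, B₀))‖
        ≤ ∫ s in (0:ℝ)..t, ((1 + C₀) * (2 * KK)) * Real.exp (-(lam / 2 * s)) := by
      refine norm_intervalIntegral_le ht (fun s hs0 hst => ?_) (by fun_prop)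
      have hc1 := hcross Vm Wm hrowVm hrowWm s hs0
      have hc2 := hcross Wm Vm hrowWm hrowVm s hs0
      have hsum : ‖Vm * psi Wm (s, B₀) + Wm * psi Vm (s, B₀)‖
          ≤ 2 * KK * Real.exp (-(lam / 2 * s)) := by
        refine (norm_add_le _ _).trans ?_
        calc ‖Vm * psi Wm (s, B₀)‖ + ‖Wm * psi Vm (s, B₀)‖
            ≤ (‖Vm‖ * ‖Wm‖ * C₀ ^ 2 * (2 / lam)) * Real.exp (-(lam / 2 * s))
              + (‖Wm‖ * ‖Vm‖ * C₀ ^ 2 * (2 / lam)) * Real.exp (-(lam / 2 * s)) :=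
              add_le_add hc1 hc2
          _ = 2 * KK * Real.exp (-(lam / 2 * s)) := by rw [hKK]; ring
      calc ‖NormedSpace.exp ((t - s) • B₀) *
            (Vm * psi Wm (s, B₀) + Wm * psi Vm (s, B₀))‖
          ≤ ‖Es (t - s)‖ * ‖Vm * psi Wm (s, B₀) + Wm * psi Vm (s, B₀)‖ := norm_mul_le _ _
        _ ≤ (1 + C₀) * (2 * KK * Real.exp (-(lam / 2 * s))) := by
            refine mul_le_mul (hEb (t - s) (by linarith)) hsum (norm_nonneg _) (by positivity)
        _ = ((1 + C₀) * (2 * KK)) * Real.exp (-(lam / 2 * s)) := by ring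
    refine h2.trans ?_
    have hKnn : (0:ℝ) ≤ (1 + C₀) * (2 * KK) := by positivity
    refine (integral_cexp_le _ (lam / 2) t hKnn (by positivity) ht).trans ?_
    apply le_of_eq
    rw [hKK]
    field_simp
    ring
  -- derivative computations
  have hFd : Differentiable ℝ (fun z : EuclideanSpace ℝ (Fin n) => NormedSpace.exp (t • Q z)) :=
    fun y => (F_hasFDerivAt Q hQd t y).differentiableAt
  have hinner : ∀ y, fderiv ℝ (fun z => (NormedSpace.exp (t • Q z)).mulVec f i) y vl
      = ∑ j, psi (Ap y) (t, Q y) i j * f j := by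
    intro y
    have h0 : (fun z => (NormedSpace.exp (t • Q z)).mulVec f i)
        = fun z => ∑ j, (NormedSpace.exp (t • Q z)) i j * f j := by
      funext z; simp [Matrix.mulVec, dotProduct]
    rw [h0]
    have hds : ∀ j ∈ Finset.univ, DifferentiableAt ℝ
        (fun z => (NormedSpace.exp (t • Q z)) i j * f j) y :=
      fun j _ => (((entryCLM i j).differentiable.comp hFd) y).mul_const (f j)
    rw [fderiv_fun_sum hds, ContinuousLinearMap.sum_apply]
    refine Finset.sum_congr rfl (fun j _ => ?_)
    have hcd : DifferentiableAt ℝ (fun z => (NormedSpace.exp (t • Q z)) i j) y :=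
      ((entryCLM i j).differentiable.comp hFd) y
    rw [fderiv_mul_const hcd]
    rw [ContinuousLinearMap.smul_apply, fderiv_entry (hFd y) vl i j]
    rw [smul_eq_mul, mul_comm]
    congr 1
    exact congrFun (congrFun (F_fderiv_apply Q hQd t y vl) i) j
  have hPsiA := PsiA_fderiv Q Ap hQd (hApd x) t
  set Nmat := phi Wm Vm (t, B₀) + psi Um (t, B₀) with hNmat
  have houter : fderiv ℝ (fun y => ∑ j, psi (Ap y) (t, Q y) i j * f j) x vk
      = ∑ j, Nmat i j * f j := by
    have hgd : DifferentiableAt ℝ (fun y => psi (Ap y) (t, Q y)) x := hPsiA.1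
    have hds : ∀ j ∈ Finset.univ, DifferentiableAt ℝ
        (fun y => psi (Ap y) (t, Q y) i j * f j) x :=
      fun j _ => ((entryCLM i j).differentiableAt.comp x hgd).mul_const (f j)
    rw [fderiv_fun_sum hds, ContinuousLinearMap.sum_apply]
    refine Finset.sum_congr rfl (fun j _ => ?_)
    have hcd : DifferentiableAt ℝ (fun y => psi (Ap y) (t, Q y) i j) x :=
      (entryCLM i j).differentiableAt.comp x hgd
    rw [fderiv_mul_const hcd]
    rw [ContinuousLinearMap.smul_apply, fderiv_entry hgd vk i j]
    rw [smul_eq_mul, mul_comm]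
    congr 1
    exact congrFun (congrFun (hPsiA.2 vk) i) j
  have htarget : fderiv ℝ (fun y =>
      fderiv ℝ (fun z => (NormedSpace.exp (t • Q z)).mulVec f i) y vl) x vk
      = ∑ j, Nmat i j * f j := by
    have hfe : (fun y => fderiv ℝ (fun z => (NormedSpace.exp (t • Q z)).mulVec f i) y vl)
        = fun y => ∑ j, psi (Ap y) (t, Q y) i j * f j := funext hinner
    rw [hfe, houter]
  rw [htarget]
  have hstep : |∑ j, Nmat i j * f j| ≤ ‖Nmat‖ := by
    calc |∑ j, Nmat i j * f j| ≤ ∑ j, |Nmat i j * f j| := Finset.abs_sum_le_sum_abs _ _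
      _ ≤ ∑ j, |Nmat i j| := Finset.sum_le_sum (fun j _ => by
            rw [abs_mul]; exact mul_le_of_le_one_right (abs_nonneg _) (hf j))
      _ ≤ ‖Nmat‖ := row_sum_le_norm Nmat i
  have hN2 : ‖Nmat‖ ≤ (8 * (1 + C₀) * C₀ ^ 2 / lam ^ 2) * (‖Wm‖ * ‖Vm‖)
      + ((1 + C₀) * C₀ / lam) * ‖Um‖ :=
    (norm_add_le _ _).trans (add_le_add hφ hψU)
  have hlV : lnorm (matPartialDeriv Q l x) = ‖Vm‖ := by rw [← hVm_eq, lnorm_eq_norm]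
  have hlW : lnorm (matPartialDeriv Q k x) = ‖Wm‖ := by rw [← hWm_eq, lnorm_eq_norm]
  have hlU : lnorm (matPartialDeriv₂ Q k l x) = ‖Um‖ := by rw [← hUm_eq, lnorm_eq_norm]
  rw [hlV, hlW, hlU]
  have c1nn : (0:ℝ) ≤ (1 + C₀) * C₀ / lam := by positivity
  have c2nn : (0:ℝ) ≤ 8 * (1 + C₀) * C₀ ^ 2 / lam ^ 2 := by positivity
  nlinarith [hstep, hN2, norm_nonneg Um,
    mul_nonneg (norm_nonneg Wm) (norm_nonneg Vm),
    mul_nonneg c1nn (mul_nonneg (norm_nonneg Wm) (norm_nonneg Vm)),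
    mul_nonneg c2nn (norm_nonneg Um)]

end Aux

/-- Second-derivative bound for the transition semigroup `P^x_t = exp(t•Q(x))`:
`sup_{t ≥ 0, i} |∂_{x_k}∂_{x_l}(P^x_t f)(i)| ≤
  C(‖∂_{x_k}Q(x)‖_ℓ‖∂_{x_l}Q(x)‖_ℓ + ‖∂_{x_k}∂_{x_l}Q(x)‖_ℓ)` with `C = C(C₀, λ)`. -/
theorem second_partialDeriv_semigroup_bound (C₀ lam : ℝ) (hC₀ : 0 < C₀) (hlam : 0 < lam) :
    ∃ C > 0, ∀ (n m : ℕ) (Q : EuclideanSpace ℝ (Fin n) → Matrix (Fin m) (Fin m) ℝ)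
      (μ : EuclideanSpace ℝ (Fin n) → Fin m → ℝ),
      (∀ x i j, i ≠ j → 0 ≤ Q x i j) →
      (∀ x i, ∑ j, Q x i j = 0) →
      (∀ i j, ContDiff ℝ 2 fun x => Q x i j) →
      (∀ x i, 0 < μ x i) →
      (∀ x, ∑ i, μ x i = 1) →
      (∀ x j, ∑ i, μ x i * Q x i j = 0) →
      (∀ x i (t : ℝ), 0 ≤ t →
        ∑ j, |NormedSpace.exp (t • Q x) i j - μ x j| ≤ C₀ * Real.exp (-lam * t)) →
      ∀ (f : Fin m → ℝ), (∀ i, |f i| ≤ 1) →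
      ∀ (x : EuclideanSpace ℝ (Fin n)) (k l : Fin n) (t : ℝ), 0 ≤ t → ∀ i,
        |fderiv ℝ (fun y =>
            fderiv ℝ (fun z => (NormedSpace.exp (t • Q z)).mulVec f i) y
              (EuclideanSpace.single l 1)) x (EuclideanSpace.single k 1)|
          ≤ C * (lnorm (matPartialDeriv Q k x) * lnorm (matPartialDeriv Q l x)
              + lnorm (matPartialDeriv₂ Q k l x)) := by
  refine ⟨(1 + C₀) * C₀ / lam + 8 * (1 + C₀) * C₀ ^ 2 / lam ^ 2, by positivity, ?_⟩
  intro n m Q μ _hpos hrow hQC hμpos hμ1 _hinv herg f hf x k l t ht i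
  exact semigroup_bound_aux C₀ lam hC₀ hlam n m Q μ hrow hQC hμpos hμ1 herg f hf x k l t ht i
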